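/- Let T, T' be column-injective tableaux for w ∈ S_n and fix 1 ≤ i < j < k ≤ n with T'(i,j) ≤ T(i,k) < T(i,j). Assume that for every positive integer r < i, the Λ-shapes Λ(r,i,j) and Λ(r,i,k) are balanced in both T and T', and that T' = ↑_M T for a multiset M of boxes not containing (i,k). Then T'(i,j) > T'(i,k). -/

import Mathlib

open Classical

noncomputable section

/-- 1-based value of a permutation of `Fin n` at a 1-based position `j`. -/
def permVal {n : ℕ} (w : Equiv.Perm (Fin n)) (j : ℕ) : ℕ :=
  if h : 1 ≤ j ∧ j ≤ n then (w ⟨j - 1, by omega⟩ : ℕ) + 1 else 0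

/-- `(i,j)` is an inversion of `w`: `1 ≤ i < j ≤ n` and the (1-based) position of the
value `j` in the one-line notation of `w` precedes that of `i`. -/
def IsInv {n : ℕ} (w : Equiv.Perm (Fin n)) (i j : ℕ) : Prop :=
  1 ≤ i ∧ i < j ∧ j ≤ n ∧ permVal w.symm j < permVal w.symm i

/-- Lehmer form entry at box `(i,j)`: the number of `k ∈ [1, T(i,j)-1]` that do not
appear below box `(i,j)` in column `j`. -/
def lehmer (T : ℕ → ℕ → ℕ) (i j : ℕ) : ℕ :=
  ((Finset.Ico 1 (T i j)).filter fun k => ∀ i', 1 ≤ i' → i' < i → T i' j ≠ k).card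

/-- Incrementing box `(i,j)` of `T` yields `T'`:  with `a = T(i,j)` and `b` the smallest
integer greater than `a` not appearing below `(i,j)` in column `j`, either a pure
increment (if `b` is absent from column `j`) or a trade increment (swap `a` and `b`). -/
def IncrementAt (T T' : ℕ → ℕ → ℕ) (i j : ℕ) : Prop :=
  ∃ b, T i j < b ∧
    (∀ k, T i j < k → k < b → ∃ i', 1 ≤ i' ∧ i' < i ∧ T i' j = k) ∧
    (∀ i', 1 ≤ i' → i' < i → T i' j ≠ b) ∧
    (((∀ i', 1 ≤ i' → T i' j ≠ b) ∧
        T' = fun a c => if a = i ∧ c = j then b else T a c) ∨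
      (∃ i'', i < i'' ∧ T i'' j = b ∧
        T' = fun a c =>
          if a = i ∧ c = j then b else if a = i'' ∧ c = j then T i j else T a c))

/-- `IncBy M T T'`: `T'` is obtained from `T` by incrementing each box of the
multiset `M` (with multiplicity). -/
inductive IncBy : Multiset (ℕ × ℕ) → (ℕ → ℕ → ℕ) → (ℕ → ℕ → ℕ) → Prop
  | nil (T : ℕ → ℕ → ℕ) : IncBy 0 T T
  | cons {M : Multiset (ℕ × ℕ)} {T T' T'' : ℕ → ℕ → ℕ} {i j : ℕ} :
      IncrementAt T T' i j → IncBy M T' T'' → IncBy ((i, j) ::ₘ M) T T''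

/-- Column-injective tableau for `w`: a box has a nonzero entry iff it is an inversion
of `w`, and the nonzero entries in each column are distinct. -/
def ColInj {n : ℕ} (w : Equiv.Perm (Fin n)) (T : ℕ → ℕ → ℕ) : Prop :=
  (∀ i j, T i j ≠ 0 ↔ IsInv w i j) ∧
  ∀ i i' j, 1 ≤ i → i < i' → i' < j → T i j ≠ 0 → T i' j ≠ 0 → T i j ≠ T i' j

/-- The Λ-shape `Λ(i,j,k)` is balanced in `T`. -/
def LBal (T : ℕ → ℕ → ℕ) (i j k : ℕ) : Prop :=
  min (T i j) (T j k) ≤ T i k ∧ T i k ≤ max (T i j) (T j k)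

/-- Every Λ-shape of `Δ_{n-1}` is balanced in `T`. -/
def BalancedTab (n : ℕ) (T : ℕ → ℕ → ℕ) : Prop :=
  ∀ i j k, 1 ≤ i → i < j → j < k → k ≤ n → LBal T i j k

/-- Inversions tableau for `w`: balanced column-injective tableau whose entries in
row `i` are at most `i`. -/
def InvTab {n : ℕ} (w : Equiv.Perm (Fin n)) (T : ℕ → ℕ → ℕ) : Prop :=
  ColInj w T ∧ BalancedTab n T ∧ ∀ i j, T i j ≤ i

/-- The multiset of entries of `T` on `hook(i,k)`. -/
def hookEntries (T : ℕ → ℕ → ℕ) (i k : ℕ) : Multiset ℕ :=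
  (T i k ::ₘ (Finset.Ioo i k).val.map fun r => T r k) +
    (Finset.Ioo i k).val.map fun c => T i c

/-- The median ((k-i)-th smallest of the `2(k-i)-1` entries) of the hook of `(i,k)`. -/
def hookMedian (T : ℕ → ℕ → ℕ) (i k : ℕ) : ℕ :=
  ((hookEntries T i k).sort (· ≤ ·)).getD (k - i - 1) 0


/-!
For a column `f = T(·, c)` put `potential f i = f i + #{r ∈ [1, i) | f r > f i}`. When the
nonzero entries of the column are distinct and `f i ≠ 0`, this is one more than the Lehmer code of
box `(i, c)` plus the number of nonzero entries below it. Hence an increment of `(i, c)` raises it by exactly one,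
and any other increment in column `c` never lowers it and leaves it unchanged while `f i ≠ 0`.

Balancedness of `Λ(r, i, c)` for all `r < i` transfers the potential of `(i, c)` to column `i`: it
equals `φ (T(i, c))` with `φ t = t + #{r ∈ [1, i) | T(r, i) > t}`. Column injectivity makes `φ`
monotone, and strictly increasing across a value missing from column `i`. If `T'(i, k) ≥ T'(i, j)`,
then `p_T(i, k) < p_T(i, j) ≤ p_T'(i, j) ≤ p_T'(i, k) = p_T(i, k)`, where the last equality holds
because `(i, k)` is never incremented.
-/

open Finset Function

def countGt (f : ℕ → ℕ) (i t : ℕ) : ℕ := #{r ∈ Ico 1 i | t < f r}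

def potential (f : ℕ → ℕ) (i : ℕ) : ℕ := countGt f i (f i) + f i

section Counting

variable {f g : ℕ → ℕ} {i t x y : ℕ}

theorem countGt_congr (h : Set.EqOn f g (Set.Ico 1 i)) (t : ℕ) :
    countGt f i t = countGt g i t := by
  unfold countGt
  congr 1
  exact filter_congr fun r hr => by rw [h (mem_Ico.1 hr)]

theorem potential_congr (h : Set.EqOn f g (Set.Iic i)) : potential f i = potential g i := by
  unfold potential
  rw [h (Set.mem_Iic.2 le_rfl), countGt_congr (h.mono fun r hr => le_of_lt hr.2)]

theorem countGt_update_add {a : ℕ} (ha : a ∈ Ico 1 i) (v : ℕ) :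
    countGt (update f a v) i t + (if t < f a then 1 else 0) =
      countGt f i t + (if t < v then 1 else 0) := by
  simp only [countGt, card_filter]
  rw [← add_sum_erase _ _ ha, ← add_sum_erase _ _ ha, update_self,
    sum_congr rfl fun r hr => by rw [update_of_ne (ne_of_mem_erase hr)]]
  ring

theorem potential_update_add {a : ℕ} (ha : a ∈ Ico 1 i) (v : ℕ) :
    potential (update f a v) i + (if f i < f a then 1 else 0) =
      potential f i + (if f i < v then 1 else 0) := by
  have hai : i ≠ a := (ne_of_lt (mem_Ico.1 ha).2).symm
  have := countGt_update_add (f := f) (t := f i) ha v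
  rw [potential, potential, update_of_ne hai]
  omega

theorem countGt_comp_swap {a a' : ℕ} (ha : a ∈ Ico 1 i) (ha' : a' ∈ Ico 1 i) (t : ℕ) :
    countGt (f ∘ Equiv.swap a a') i t = countGt f i t := by
  have hmem : ∀ r ∈ Ico 1 i, Equiv.swap a a' r ∈ Ico 1 i := fun r hr => by
    rw [Equiv.swap_apply_def]; split_ifs <;> assumption
  refine card_bij' (fun r _ => Equiv.swap a a' r) (fun r _ => Equiv.swap a a' r) ?_ ?_ ?_ ?_
  · intro r hr
    simp only [mem_filter, comp_apply] at hr ⊢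
    exact ⟨hmem r hr.1, hr.2⟩
  · intro r hr
    simp only [mem_filter, comp_apply, Equiv.swap_apply_self] at hr ⊢
    exact ⟨hmem r hr.1, hr.2⟩
  all_goals simp

theorem potential_comp_swap {a a' : ℕ} (ha : a ∈ Ico 1 i) (ha' : a' ∈ Ico 1 i) :
    potential (f ∘ Equiv.swap a a') i = potential f i := by
  have hi : Equiv.swap a a' i = i :=
    Equiv.swap_apply_of_ne_of_ne (mem_Ico.1 ha).2.ne' (mem_Ico.1 ha').2.ne'
  rw [potential, potential, countGt_comp_swap ha ha', comp_apply, hi]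

theorem countGt_eq_add_card (hxy : x ≤ y) :
    countGt f i x = countGt f i y + #{r ∈ Ico 1 i | x < f r ∧ f r ≤ y} := by
  unfold countGt
  rw [← card_filter_add_card_filter_not (s := {r ∈ Ico 1 i | x < f r}) (fun r => y < f r),
    filter_filter, filter_filter]
  congr 2 <;> ext r <;> simp only [mem_filter]
  all_goals constructor <;> rintro ⟨hr, h⟩ <;> exact ⟨hr, by omega⟩

theorem countGt_pred (hy : ∀ r ∈ Ico 1 i, f r ≠ y) : countGt f i (y - 1) = countGt f i y := by
  unfold countGt
  congr 1
  exact filter_congr fun r hr => by have := hy r hr; omega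

theorem countGt_le_add_sub (hf : Set.InjOn f (support f)) (hxy : x ≤ y) :
    countGt f i x ≤ countGt f i y + (y - x) := by
  rw [countGt_eq_add_card hxy, ← Nat.card_Ioc]
  refine Nat.add_le_add_left
    (card_le_card_of_injOn f (fun r hr => ?_) fun r₁ hr₁ r₂ hr₂ h => ?_) _
  · simp only [mem_coe, mem_filter, mem_Ioc] at hr ⊢
    exact hr.2
  · simp only [mem_coe, mem_filter] at hr₁ hr₂
    exact hf (mem_support.2 (by omega)) (mem_support.2 (by omega)) h

theorem countGt_eq_add_of_fill (hf : Set.InjOn f (support f)) (hxy : x < y)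
    (hfill : ∀ v, x < v → v < y → ∃ r ∈ Ico 1 i, f r = v) (hy : ∀ r ∈ Ico 1 i, f r ≠ y) :
    countGt f i x = countGt f i y + (y - x - 1) := by
  rw [countGt_eq_add_card hxy.le, ← Nat.card_Ioo]
  congr 1
  refine card_nbij f (fun r hr => ?_) (fun r₁ hr₁ r₂ hr₂ h => ?_) fun v hv => ?_
  · simp only [mem_coe, mem_filter, mem_Ioo] at hr ⊢
    have := hy r hr.1
    omega
  · simp only [mem_coe, mem_filter] at hr₁ hr₂
    exact hf (mem_support.2 (by omega)) (mem_support.2 (by omega)) h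
  · simp only [mem_coe, mem_Ioo] at hv
    obtain ⟨r, hr, rfl⟩ := hfill v hv.1 hv.2
    exact ⟨r, by simp [mem_Ico.1 hr, hv.1, hv.2.le], rfl⟩

theorem countGt_add_le_countGt_add (hf : Set.InjOn f (support f)) (hxy : x ≤ y) :
    countGt f i x + x ≤ countGt f i y + y := by
  have := countGt_le_add_sub (i := i) hf hxy
  omega

theorem countGt_add_lt_countGt_add (hf : Set.InjOn f (support f)) (hxy : x < y)
    (hy : ∀ r ∈ Ico 1 i, f r ≠ y) : countGt f i x + x < countGt f i y + y := by
  have := countGt_add_le_countGt_add (i := i) hf (by omega : x ≤ y - 1)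
  rw [countGt_pred hy] at this
  omega

end Counting

theorem ColInj.apply_zero {n : ℕ} {w : Equiv.Perm (Fin n)} {T : ℕ → ℕ → ℕ} (h : ColInj w T)
    (c : ℕ) : T 0 c = 0 := by
  by_contra h0
  exact absurd ((h.1 0 c).1 h0).1 (by omega)

theorem ColInj.injOn {n : ℕ} {w : Equiv.Perm (Fin n)} {T : ℕ → ℕ → ℕ} (h : ColInj w T)
    (c : ℕ) : Set.InjOn (T · c) (support (T · c)) := by
  intro r hr r' hr' he
  rw [mem_support] at hr hr'
  have hinv := (h.1 r c).1 hr
  have hinv' := (h.1 r' c).1 hr'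
  by_contra hne
  rcases lt_or_gt_of_ne hne with hlt | hlt
  · exact h.2 r r' c hinv.1 hlt hinv'.2.1 hr hr' he
  · exact h.2 r' r c hinv'.1 hlt hinv.2.1 hr' hr he.symm

section Balanced

variable {S : ℕ → ℕ → ℕ} {i c : ℕ}

theorem LBal.apply_ne {r : ℕ} (hbal : LBal S r i c) (hf : Set.InjOn (S · c) (support (S · c)))
    (hr : r ≠ i) (hc : S i c ≠ 0) : S r i ≠ S i c := by
  intro h
  rw [LBal, h, min_self, max_self] at hbal
  have hrc := le_antisymm hbal.2 hbal.1
  exact hr (hf (by simp [hrc, hc]) (by simpa using hc) hrc)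

theorem potential_le_of_lbal (hbal : ∀ r, 1 ≤ r → r < i → LBal S r i c) :
    potential (S · c) i ≤ countGt (S · i) i (S i c) + S i c := by
  refine Nat.add_le_add_right (card_le_card fun r hr => ?_) _
  simp only [mem_filter] at hr ⊢
  obtain ⟨h₁, h₂⟩ := mem_Ico.1 hr.1
  refine ⟨hr.1, ?_⟩
  rcases le_max_iff.1 (hbal r h₁ h₂).2 with h | h <;> omega

theorem le_potential_of_lbal (hbal : ∀ r, 1 ≤ r → r < i → LBal S r i c)
    (hf : Set.InjOn (S · c) (support (S · c))) (hc : S i c ≠ 0) :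
    countGt (S · i) i (S i c) + S i c ≤ potential (S · c) i := by
  refine Nat.add_le_add_right (card_le_card fun r hr => ?_) _
  simp only [mem_filter] at hr ⊢
  obtain ⟨h₁, h₂⟩ := mem_Ico.1 hr.1
  refine ⟨hr.1, ?_⟩
  have hmin := (hbal r h₁ h₂).1
  rw [min_eq_right hr.2.le] at hmin
  have hne : S r c ≠ S i c := fun h => h₂.ne (hf (by simp [h, hc]) (by simpa using hc) h)
  omega

theorem potential_eq_of_lbal (hbal : ∀ r, 1 ≤ r → r < i → LBal S r i c)
    (hf : Set.InjOn (S · c) (support (S · c))) (hc : S i c ≠ 0) :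
    potential (S · c) i = countGt (S · i) i (S i c) + S i c :=
  (potential_le_of_lbal hbal).antisymm (le_potential_of_lbal hbal hf hc)

end Balanced

/-- `IncrementAt S S' a c` seen in column `c`, with `f = (S · c)`, `g = (S' · c)` and `b` the new
entry of row `a`; a trade increment swaps the entries of rows `a` and `a'`. -/
structure ColumnIncrement (f g : ℕ → ℕ) (a b : ℕ) : Prop where
  lt : f a < b
  fill : ∀ y, f a < y → y < b → ∃ r ∈ Ico 1 a, f r = y
  not_below : ∀ r ∈ Ico 1 a, f r ≠ b
  pure_or_trade : (∀ r, 1 ≤ r → f r ≠ b) ∧ g = update f a b ∨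
    ∃ a', a < a' ∧ f a' = b ∧ g = f ∘ Equiv.swap a a'

section IncrementAt

variable {S S' : ℕ → ℕ → ℕ} {a c : ℕ}

theorem IncrementAt.column (h : IncrementAt S S' a c) :
    ∃ b, ColumnIncrement (S · c) (S' · c) a b := by
  obtain ⟨b, hlt, hfill, hnb, hcase⟩ := h
  refine ⟨b, hlt, fun y h₁ h₂ => ?_, fun r hr => hnb r (mem_Ico.1 hr).1 (mem_Ico.1 hr).2, ?_⟩
  · obtain ⟨r, hr₁, hr₂, hr⟩ := hfill y h₁ h₂
    exact ⟨r, mem_Ico.2 ⟨hr₁, hr₂⟩, hr⟩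
  · rcases hcase with ⟨hb, rfl⟩ | ⟨a', ha', hb, rfl⟩
    · refine Or.inl ⟨hb, funext fun r => ?_⟩
      by_cases hr : r = a <;> simp [hr]
    · refine Or.inr ⟨a', ha', hb, funext fun r => ?_⟩
      simp only [comp_apply, Equiv.swap_apply_def]
      split_ifs <;> simp_all

theorem IncrementAt.column_of_ne (h : IncrementAt S S' a c) {c' : ℕ} (hc : c' ≠ c) :
    (S' · c') = (S · c') := by
  obtain ⟨b, -, -, -, ⟨-, rfl⟩ | ⟨a', -, -, rfl⟩⟩ := h <;> funext r <;> simp [hc]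

end IncrementAt

namespace ColumnIncrement

variable {f g : ℕ → ℕ} {a b i : ℕ}

theorem apply_self (h : ColumnIncrement f g a b) : g a = b := by
  rcases h.pure_or_trade with ⟨-, rfl⟩ | ⟨a', -, hb, rfl⟩
  · exact update_self _ _ _
  · simp [hb]

theorem apply_of_lt (h : ColumnIncrement f g a b) {r : ℕ} (hr : r < a) : g r = f r := by
  rcases h.pure_or_trade with ⟨-, rfl⟩ | ⟨a', ha', -, rfl⟩
  · exact update_of_ne hr.ne _ _
  · simp [Equiv.swap_apply_of_ne_of_ne hr.ne (hr.trans ha').ne]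

theorem apply_le (h : ColumnIncrement f g a b) {r : ℕ} (hr : r ≠ a) : g r ≤ f r := by
  rcases h.pure_or_trade with ⟨-, rfl⟩ | ⟨a', -, hb, rfl⟩
  · exact (update_of_ne hr _ _).le
  · by_cases hr' : r = a'
    · subst hr'
      simpa [hb] using h.lt.le
    · simp [Equiv.swap_apply_of_ne_of_ne hr hr']

theorem apply_zero_le (h : ColumnIncrement f g a b) : f 0 ≤ g 0 := by
  rcases Nat.eq_zero_or_pos a with rfl | ha
  · exact h.apply_self ▸ h.lt.le
  · exact (h.apply_of_lt ha).ge

theorem injOn (h : ColumnIncrement f g a b) (hf : Set.InjOn f (support f)) (h0 : f 0 = 0) :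
    Set.InjOn g (support g) := by
  rcases h.pure_or_trade with ⟨hb, rfl⟩ | ⟨a', -, -, rfl⟩
  · have hb' : ∀ r, r ≠ a → f r ≠ b := fun r _ => by
      rcases Nat.eq_zero_or_pos r with rfl | hr
      · have := h.lt
        omega
      · exact hb r hr
    intro r hr r' hr' he
    rw [mem_support] at hr hr'
    by_cases hra : r = a <;> by_cases hr'a : r' = a
    · rw [hra, hr'a]
    · rw [hra, update_self, update_of_ne hr'a] at he
      exact absurd he.symm (hb' r' hr'a)
    · rw [hr'a, update_self, update_of_ne hra] at he
      exact absurd he (hb' r hra)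
    · rw [update_of_ne hra] at hr he
      rw [update_of_ne hr'a] at hr' he
      exact hf hr hr' he
  · exact hf.comp (Equiv.injective _).injOn fun r hr => hr

theorem eqOn_update_or (h : ColumnIncrement f g a b) (i : ℕ) :
    Set.EqOn g (update f a b) (Set.Iic i) ∨
      ∃ a', a < a' ∧ a' ≤ i ∧ f a' = b ∧ g = f ∘ Equiv.swap a a' := by
  rcases h.pure_or_trade with ⟨-, rfl⟩ | ⟨a', ha', hb, rfl⟩
  · exact Or.inl (Set.eqOn_refl _ _)
  · by_cases ha'i : a' ≤ i
    · exact Or.inr ⟨a', ha', ha'i, hb, rfl⟩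
    · refine Or.inl fun r hr => ?_
      have hr' : r ≠ a' := by rintro rfl; exact ha'i hr
      by_cases hra : r = a
      · simp [hra, hb]
      · simp [Equiv.swap_apply_of_ne_of_ne hra hr', update_of_ne hra]

theorem potential_eq_of_gt (h : ColumnIncrement f g a b) (hia : i < a) :
    potential g i = potential f i := by
  rcases h.eqOn_update_or i with hU | ⟨a', ha', ha'i, -⟩
  · rw [potential_congr hU]
    exact potential_congr fun r hr => update_of_ne ((Set.mem_Iic.1 hr).trans_lt hia).ne _ _
  · omega

theorem countGt_eq (h : ColumnIncrement f g a b) (hf : Set.InjOn f (support f)) (hai : a ≤ i)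
    (hb : ∀ r ∈ Ico 1 i, f r ≠ b) : countGt f i (f a) = countGt f i b + (b - f a - 1) :=
  countGt_eq_add_of_fill hf h.lt
    (fun y h₁ h₂ => (h.fill y h₁ h₂).imp fun _ hr => ⟨Ico_subset_Ico_right hai hr.1, hr.2⟩) hb

theorem potential_self (h : ColumnIncrement f g a b) (hf : Set.InjOn f (support f)) :
    potential g a = potential f a + 1 := by
  rcases h.eqOn_update_or a with hU | ⟨a', ha', ha'a, -⟩
  · have hbelow : Set.EqOn (update f a b) f (Set.Ico 1 a) :=
      fun r hr => update_of_ne hr.2.ne _ _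
    rw [potential_congr hU, potential, potential, update_self, countGt_congr hbelow,
      h.countGt_eq hf le_rfl h.not_below]
    have := h.lt
    omega
  · omega

theorem lt_iff (h : ColumnIncrement f g a b) (hf : Set.InjOn f (support f)) (hai : a < i)
    (hi : f i ≠ 0) : f i < b ↔ f i < f a := by
  refine ⟨fun hib => ?_, fun hia => hia.trans h.lt⟩
  by_contra! hia
  rcases hia.lt_or_eq with hlt | heq
  · obtain ⟨r, hr, hri⟩ := h.fill _ hlt hib
    exact ((mem_Ico.1 hr).2.trans hai).ne (hf (by simp [hri, hi]) hi hri)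
  · exact hai.ne (hf (by simp [heq, hi]) hi heq)

theorem potential_comp_swap_self (h : ColumnIncrement f g a b) (hf : Set.InjOn f (support f))
    (ha : 1 ≤ a) (hai : a < i) (hfi : f i = b) :
    potential (f ∘ Equiv.swap a i) i = potential f i := by
  have hb0 : b ≠ 0 := by
    have := h.lt
    omega
  have hU : Set.EqOn (f ∘ Equiv.swap a i) (update f a b) (Set.Ico 1 i) := fun r hr => by
    by_cases hra : r = a
    · simp [hra, hfi]
    · simp [Equiv.swap_apply_of_ne_of_ne hra hr.2.ne, update_of_ne hra]
  have hb : ∀ r ∈ Ico 1 i, f r ≠ b := fun r hr he =>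
    (mem_Ico.1 hr).2.ne (hf (mem_support.2 (he.trans_ne hb0))
      (mem_support.2 (hfi.trans_ne hb0)) (he.trans hfi.symm))
  have hupd := countGt_update_add (f := f) (t := f a) (mem_Ico.2 ⟨ha, hai⟩) b
  rw [if_neg (lt_irrefl _), if_pos h.lt] at hupd
  rw [potential, potential, countGt_congr hU, comp_apply, Equiv.swap_apply_right, hfi]
  have := h.countGt_eq hf hai.le hb
  have := h.lt
  omega

theorem potential_eq_of_lt (h : ColumnIncrement f g a b) (hf : Set.InjOn f (support f))
    (ha : 1 ≤ a) (hai : a < i) (hi : f i ≠ 0) : potential g i = potential f i := by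
  rcases h.eqOn_update_or i with hU | ⟨a', ha', ha'i, hb, rfl⟩
  · have hupd := potential_update_add (f := f) (mem_Ico.2 ⟨ha, hai⟩) b
    rw [potential_congr hU]
    simp only [h.lt_iff hf hai hi] at hupd
    omega
  · rcases ha'i.lt_or_eq with ha'i | rfl
    · exact potential_comp_swap (mem_Ico.2 ⟨ha, hai⟩) (mem_Ico.2 ⟨by omega, ha'i⟩)
    · exact h.potential_comp_swap_self hf ha hai hb

theorem potential_le_of_lt_of_apply_eq_zero (h : ColumnIncrement f g a b) (ha : 1 ≤ a)
    (hai : a < i) (hi : f i = 0) : potential f i ≤ potential g i := by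
  have hb := h.lt
  rcases h.eqOn_update_or i with hU | ⟨a', ha', ha'i, hfa', rfl⟩
  · have hupd := potential_update_add (f := f) (mem_Ico.2 ⟨ha, hai⟩) b
    rw [potential_congr hU]
    split_ifs at hupd <;> omega
  · have ha'i : a' < i := ha'i.lt_of_ne (by rintro rfl; omega)
    exact (potential_comp_swap (mem_Ico.2 ⟨ha, hai⟩) (mem_Ico.2 ⟨by omega, ha'i⟩)).ge

theorem potential_le (h : ColumnIncrement f g a b) (hf : Set.InjOn f (support f)) (ha : 1 ≤ a)
    (i : ℕ) : potential f i ≤ potential g i := by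
  rcases lt_trichotomy i a with hia | rfl | hai
  · exact (h.potential_eq_of_gt hia).ge
  · rw [h.potential_self hf]
    omega
  · by_cases hi : f i = 0
    · exact h.potential_le_of_lt_of_apply_eq_zero ha hai hi
    · exact (h.potential_eq_of_lt hf ha hai hi).ge

theorem potential_eq (h : ColumnIncrement f g a b) (hf : Set.InjOn f (support f)) (ha : 1 ≤ a)
    (hai : a ≠ i) (hi : f i ≠ 0) : potential g i = potential f i := by
  rcases hai.lt_or_gt with hai | hia
  · exact h.potential_eq_of_lt hf ha hai hi
  · exact h.potential_eq_of_gt hia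

end ColumnIncrement

section IncBy

variable {M : Multiset (ℕ × ℕ)} {S S' : ℕ → ℕ → ℕ}

theorem IncrementAt.apply_zero_le {a c : ℕ} (h : IncrementAt S S' a c) (c' : ℕ) :
    S 0 c' ≤ S' 0 c' := by
  by_cases hc : c' = c
  · subst hc
    obtain ⟨b, hb⟩ := h.column
    exact hb.apply_zero_le
  · exact (congrFun (h.column_of_ne hc) 0).ge

theorem IncBy.apply_zero_le (h : IncBy M S S') (c : ℕ) : S 0 c ≤ S' 0 c := by
  induction h with
  | nil => exact le_rfl
  | cons hstep _ ih => exact (hstep.apply_zero_le c).trans ih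

theorem IncBy.column_rel {c : ℕ} {R : (ℕ → ℕ) → (ℕ → ℕ) → Prop} (hrefl : ∀ f, R f f)
    (htrans : ∀ f g k, R f g → R g k → R f k)
    (hstep : ∀ f g a b, (a, c) ∈ M → 1 ≤ a → Set.InjOn f (support f) →
      ColumnIncrement f g a b → R f g)
    (h : IncBy M S S') (hf : Set.InjOn (S · c) (support (S · c))) (h0 : S 0 c = 0)
    (h0' : S' 0 c = 0) : R (S · c) (S' · c) := by
  induction h with
  | nil => exact hrefl _
  | @cons M T T₁ T₂ a c₀ hinc hrest ih =>
    have hstep' := fun f g a b hm => hstep f g a b (Multiset.mem_cons_of_mem hm)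
    by_cases hc : c₀ = c
    · subst hc
      obtain ⟨b, hb⟩ := hinc.column
      -- an increment in row `0` would leave a nonzero entry there for good
      have ha : 1 ≤ a := by
        by_contra! ha
        obtain rfl : a = 0 := by omega
        have : T₁ 0 c₀ = b := hb.apply_self
        have : T 0 c₀ < b := hb.lt
        have := hrest.apply_zero_le c₀
        omega
      exact htrans _ _ _ (hstep _ _ a b (Multiset.mem_cons_self _ _) ha hf hb)
        (ih hstep' (hb.injOn hf h0) ((hb.apply_of_lt ha).trans h0) h0')
    · have hcol := hinc.column_of_ne (Ne.symm hc)
      rw [← hcol] at hf ⊢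
      exact ih hstep' hf ((congrFun hcol 0).trans h0) h0'

theorem IncBy.potential_le (h : IncBy M S S') {c : ℕ} (i : ℕ)
    (hf : Set.InjOn (S · c) (support (S · c))) (h0 : S 0 c = 0) (h0' : S' 0 c = 0) :
    potential (S · c) i ≤ potential (S' · c) i :=
  h.column_rel (R := fun f g => potential f i ≤ potential g i) (fun _ => le_rfl)
    (fun _ _ _ => le_trans) (fun _ _ _ _ _ ha hf hfg => hfg.potential_le hf ha i) hf h0 h0'

theorem IncBy.potential_eq_of_notMem (h : IncBy M S S') {i c : ℕ} (hM : (i, c) ∉ M)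
    (hf : Set.InjOn (S · c) (support (S · c))) (h0 : S 0 c = 0) (h0' : S' 0 c = 0)
    (hi : S' i c ≠ 0) : potential (S' · c) i = potential (S · c) i := by
  refine (h.column_rel
    (R := fun f g => g i ≠ 0 → g i ≤ f i ∧ potential g i = potential f i)
    (fun _ _ => ⟨le_rfl, rfl⟩) (fun f g k hfg hgk hk => ?_) (fun f g a b hm ha hf hfg hg => ?_)
    hf h0 h0' hi).2
  · obtain ⟨hkg, hpk⟩ := hgk hk
    obtain ⟨hgf, hpg⟩ := hfg (by omega)
    exact ⟨hkg.trans hgf, hpk.trans hpg⟩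
  · have hai : a ≠ i := by rintro rfl; exact hM hm
    have hgf := hfg.apply_le hai.symm
    exact ⟨hgf, hfg.potential_eq hf ha hai (by omega)⟩

end IncBy

theorem entry_lt_of_balanced_general {n : ℕ} (w : Equiv.Perm (Fin n)) (T T' : ℕ → ℕ → ℕ)
    (hT : ColInj w T) (hT' : ColInj w T') (i j k : ℕ)
    (h2 : T i k < T i j)
    (hbal : ∀ r, 1 ≤ r → r < i →
      LBal T r i j ∧ LBal T r i k ∧ LBal T' r i j ∧ LBal T' r i k)
    (M : Multiset (ℕ × ℕ)) (hM : IncBy M T T') (hnot : (i, k) ∉ M) :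
    T' i k < T' i j := by
  by_contra! hle
  have hj : T' i j ≠ 0 := (hT'.1 i j).2 ((hT.1 i j).1 (by omega))
  have hk := hM.potential_eq_of_notMem hnot (hT.injOn k) (hT.apply_zero k) (hT'.apply_zero k)
    (by omega)
  have hk' : T i k ≠ 0 := (hT.1 i k).2 ((hT'.1 i k).1 (by omega))
  have hbelow : ∀ r ∈ Ico 1 i, T r i ≠ T i j := fun r hr =>
    (hbal r (mem_Ico.1 hr).1 (mem_Ico.1 hr).2).1.apply_ne (hT.injOn j) (mem_Ico.1 hr).2.ne
      (by omega)
  have := calc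
    potential (T · k) i = countGt (T · i) i (T i k) + T i k :=
      potential_eq_of_lbal (fun r h₁ h₂ => (hbal r h₁ h₂).2.1) (hT.injOn k) hk'
    _ < countGt (T · i) i (T i j) + T i j := countGt_add_lt_countGt_add (hT.injOn i) h2 hbelow
    _ = potential (T · j) i :=
      (potential_eq_of_lbal (fun r h₁ h₂ => (hbal r h₁ h₂).1) (hT.injOn j) (by omega)).symm
    _ ≤ potential (T' · j) i := hM.potential_le i (hT.injOn j) (hT.apply_zero j) (hT'.apply_zero j)
    _ = countGt (T' · i) i (T' i j) + T' i j :=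
      potential_eq_of_lbal (fun r h₁ h₂ => (hbal r h₁ h₂).2.2.1) (hT'.injOn j) hj
    _ ≤ countGt (T' · i) i (T' i k) + T' i k := countGt_add_le_countGt_add (hT'.injOn i) hle
    _ = potential (T' · k) i :=
      (potential_eq_of_lbal (fun r h₁ h₂ => (hbal r h₁ h₂).2.2.2) (hT'.injOn k) (by omega)).symm
    _ = potential (T · k) i := hk
  exact lt_irrefl _ this

theorem entry_lt_of_balanced {n : ℕ} (w : Equiv.Perm (Fin n)) (T T' : ℕ → ℕ → ℕ)
    (hT : ColInj w T) (hT' : ColInj w T') (i j k : ℕ)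
    (hi : 1 ≤ i) (hij : i < j) (hjk : j < k) (hkn : k ≤ n)
    (h1 : T' i j ≤ T i k) (h2 : T i k < T i j)
    (hbal : ∀ r, 1 ≤ r → r < i →
      LBal T r i j ∧ LBal T r i k ∧ LBal T' r i j ∧ LBal T' r i k)
    (M : Multiset (ℕ × ℕ)) (hM : IncBy M T T') (hnot : (i, k) ∉ M) :
    T' i k < T' i j :=
  entry_lt_of_balanced_general w T T' hT hT' i j k h2 hbal M hM hnot
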